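/- Let n ≥ 2 and l ∈ {0,…,n}. For all u¹, v¹ ∈ Λ¹ and all u^l, v^l ∈ Λ^l, the identity ⟨u¹∨u^l, v¹∨v^l⟩ + ⟨v¹∧u^l, u¹∧v^l⟩ = ⟨u¹, v¹⟩⟨u^l, v^l⟩ holds. -/

import Mathlib

noncomputable section

open MeasureTheory Finset

namespace EMPaper

/-- Points of `ℝⁿ`. -/
abbrev Pt (n : ℕ) := Fin n → ℝ

/-- A graded element of the complexified exterior algebra `Λ ℝⁿ ⊗ ℂ`, encoded by its
coefficients on the basis monomials `dx^{α₁} ∧ ⋯ ∧ dx^{α_l}`, indexed by the set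
`{α₁ < ⋯ < α_l} ⊆ Fin n`. -/
abbrev GF (n : ℕ) := Finset (Fin n) → ℂ

/-- A graded differential form on `ℝⁿ`. -/
abbrev Form (n : ℕ) := Pt n → GF n

variable {n : ℕ}

/-- The sign `(-1)^{#{(i,j) ∈ I × J : j < i}}` obtained when merging the increasing
enumerations of the disjoint sets `I` and `J`. -/
def msgn (I J : Finset (Fin n)) : ℂ :=
  (-1 : ℂ) ^ (((I ×ˢ J).filter fun p => p.2 < p.1).card)

/-- The wedge (exterior) product. -/
def wedge (u v : GF n) : GF n := fun S =>
  ∑ I ∈ S.powerset, msgn I (S \ I) * u I * v (S \ I)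

/-- The vee product, determined by `⟨w, v ∨ u⟩ = ⟨w ∧ v, u⟩`. -/
def vee (v u : GF n) : GF n := fun I =>
  ∑ J ∈ (univ \ I).powerset, msgn I J * v J * u (I ∪ J)

/-- The ℂ-bilinear (non-Hermitian) inner product for which the basis monomials are
orthonormal. -/
def ginner (u v : GF n) : ℂ := ∑ S : Finset (Fin n), u S * v S

/-- Componentwise complex conjugation. -/
def gconj (u : GF n) : GF n := fun S => (starRingEnd ℂ) (u S)

/-- Projection onto the degree-`l` part. -/
def proj (l : ℕ) (u : GF n) : GF n := fun S => if S.card = l then u S else 0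

/-- `u` is homogeneous of degree `l` (an element of `Λ^l`). -/
def IsGrade (l : ℕ) (u : GF n) : Prop := ∀ S : Finset (Fin n), S.card ≠ l → u S = 0

/-- The basis one-form `dx^j`. -/
def dxe (j : Fin n) : GF n := fun S => if S = {j} then 1 else 0

/-- The one-form with components `c j`. -/
def oneG (c : Fin n → ℂ) : GF n := fun S => ∑ j, if S = {j} then c j else 0

/-- `Σ_l (-1)^l u^l`. -/
def altSign (u : GF n) : GF n := fun S => (-1 : ℂ) ^ S.card * u S

/-- Exterior derivative `du = Σ_j dx^j ∧ ∂_j u`, expressed in terms of the family of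
partial derivatives `D j = ∂_j u` at a point. -/
def gd (D : Fin n → GF n) : GF n := fun S => ∑ j, wedge (dxe j) (D j) S

/-- Coderivative `δu = (-1)^l Σ_j dx^j ∨ ∂_j u` (degreewise on graded forms), expressed
in terms of the family of partial derivatives `D j = ∂_j u` at a point. -/
def gdel (D : Fin n → GF n) : GF n := fun S =>
  (-1 : ℂ) ^ (S.card + 1) * ∑ j, vee (dxe j) (D j) S

/-- Classical partial derivative `∂_{x^j}` of a complex-valued function. -/
def pd (j : Fin n) (f : Pt n → ℂ) : Pt n → ℂ := fun x => fderiv ℝ f x (Pi.single j 1)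

/-- Componentwise classical partial derivatives of a graded form. -/
def Dcl (φ : Form n) : Fin n → Form n := fun j x S => pd j (fun y => φ y S) x

/-- A test function: smooth and compactly supported. -/
def IsTest (φ : Pt n → ℂ) : Prop := ContDiff ℝ (⊤ : ℕ∞) φ ∧ HasCompactSupport φ

/-- A graded form all of whose components are test functions. -/
def TestForm (φ : Form n) : Prop := ∀ S : Finset (Fin n), IsTest fun x => φ x S

/-- `f ∈ L²_loc(ℝⁿ)`. -/
def L2loc (f : Pt n → ℂ) : Prop :=
  AEStronglyMeasurable f (volume : Measure (Pt n)) ∧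
    ∀ K : Set (Pt n), IsCompact K → IntegrableOn (fun x => ‖f x‖ ^ 2) K volume

/-- `g` is the weak `j`-th partial derivative of `f` on `ℝⁿ`. -/
def HasWeakPD (j : Fin n) (f g : Pt n → ℂ) : Prop :=
  ∀ φ : Pt n → ℂ, IsTest φ → ∫ x, g x * φ x = -∫ x, f x * pd j φ x

/-- All components of the graded form `w` belong to `H¹_loc(ℝⁿ)`, with weak partial
derivatives given componentwise by the family `Dw`. -/
def H1locWith (w : Form n) (Dw : Fin n → Form n) : Prop :=
  (∀ S : Finset (Fin n), L2loc fun x => w x S) ∧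
    (∀ (j : Fin n) (S : Finset (Fin n)),
      HasWeakPD j (fun x => w x S) fun x => Dw j x S) ∧
    ∀ (j : Fin n) (S : Finset (Fin n)), L2loc fun x => Dw j x S

/-!
Since `u¹` and `v¹` are one-forms, `u¹ ∨ ·` deletes one index and `v¹ ∧ ·` inserts one, so both
inner products expand into sums over pairs `(j, k)` of indices. The diagonal terms `j = k`
contribute `u¹_j v¹_j u^l_T v^l_T`, summed over `j ∈ T` from the vee products and over `j ∉ T`
from the wedge products; together they give `⟨u¹, v¹⟩⟨u^l, v^l⟩`. The off-diagonal terms cancel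
in pairs, because moving `j` and `k` past each other costs exactly one sign.
-/

section Reindex

variable {α M : Type*} [Fintype α] [DecidableEq α] [AddCommMonoid M]

theorem sum_sum_compl_insert (f : α → Finset α → M) :
    ∑ I, ∑ j ∈ Iᶜ, f j (insert j I) = ∑ T, ∑ j ∈ T, f j T := by
  rw [sum_sigma', sum_sigma']
  refine sum_nbij' (fun x => ⟨insert x.2 x.1, x.2⟩) (fun x => ⟨x.1.erase x.2, x.2⟩)
    ?_ ?_ ?_ ?_ fun _ _ => rfl
  · rintro ⟨I, j⟩ -
    simp
  · rintro ⟨T, j⟩ -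
    simp
  · rintro ⟨I, j⟩ h
    simp_all
  · rintro ⟨T, j⟩ h
    simp_all

theorem sum_offDiag_compl_insert_insert (f : α → α → Finset α → M) :
    ∑ I, ∑ p ∈ Iᶜ.offDiag, f p.1 p.2 (insert p.1 (insert p.2 I)) =
      ∑ S, ∑ p ∈ S.offDiag, f p.1 p.2 S := by
  rw [sum_sigma', sum_sigma']
  refine sum_nbij' (fun x => ⟨insert x.2.1 (insert x.2.2 x.1), x.2⟩)
    (fun x => ⟨(x.1.erase x.2.1).erase x.2.2, x.2⟩) ?_ ?_ ?_ ?_ fun _ _ => rfl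
  · rintro ⟨I, j, k⟩ h
    simp_all
  · rintro ⟨S, j, k⟩ h
    simp_all
  · rintro ⟨I, j, k⟩ h
    simp_all
  · rintro ⟨S, j, k⟩ h
    simp only [mem_sigma, mem_univ, mem_offDiag, true_and] at h
    rw [insert_erase (mem_erase.2 ⟨Ne.symm h.2.2, h.2.1⟩), insert_erase h.1]

end Reindex

theorem sum_mul_sum_eq_sum_add_sum_offDiag {ι R : Type*} [DecidableEq ι]
    [NonUnitalNonAssocSemiring R] (s : Finset ι) (x y : ι → R) :
    (∑ j ∈ s, x j) * ∑ k ∈ s, y k = ∑ j ∈ s, x j * y j + ∑ p ∈ s.offDiag, x p.1 * y p.2 := by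
  rw [sum_mul_sum, ← sum_product', ← diag_union_offDiag, sum_union (disjoint_diag_offDiag s),
    sum_diag]

theorem sum_powerset_eq_sum_singleton {α M : Type*} [AddCommMonoid M] (P : Finset α)
    {F : Finset α → M} (hF : ∀ J, #J ≠ 1 → F J = 0) :
    ∑ J ∈ P.powerset, F J = ∑ j ∈ P, F {j} := by
  classical
  rw [← sum_filter_of_ne fun J _ hJ => by_contra fun h => hJ (hF J h),
    ← powersetCard_eq_filter, powersetCard_one, sum_map]
  rfl

theorem neg_one_pow_card_filter_lt {α R : Type*} [LinearOrder α] [Ring R] {I : Finset α} {k : α}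
    (hk : k ∉ I) : (-1 : R) ^ #{i ∈ I | i < k} = (-1) ^ #I * (-1) ^ #{i ∈ I | k < i} := by
  have hsplit : #{i ∈ I | i < k} + #{i ∈ I | k < i} = #I := by
    rw [← card_filter_add_card_filter_not (s := I) (· < k)]
    congr 2
    refine filter_congr fun i hi => ?_
    have : i ≠ k := fun h => hk (h ▸ hi)
    exact ⟨fun h => not_lt.2 h.le, fun h => lt_of_le_of_ne (not_lt.1 h) this.symm⟩
  rw [← hsplit, pow_add, mul_assoc, ← pow_add, ← two_mul, pow_mul, neg_one_sq, one_pow, mul_one]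

theorem msgn_mul_self (I J : Finset (Fin n)) : msgn I J * msgn I J = 1 := by
  simp [msgn, ← mul_pow]

theorem msgn_singleton_right (I : Finset (Fin n)) (j : Fin n) :
    msgn I {j} = (-1) ^ #{i ∈ I | j < i} := by
  rw [msgn, product_singleton, filter_map, card_map]
  rfl

theorem msgn_singleton_left (k : Fin n) (T : Finset (Fin n)) :
    msgn {k} T = (-1) ^ #{t ∈ T | t < k} := by
  rw [msgn, singleton_product, filter_map, card_map]
  rfl

theorem msgn_singleton_insert_mul_msgn_singleton_insert {I : Finset (Fin n)} {j k : Fin n}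
    (hj : j ∉ I) (hk : k ∉ I) (hjk : j ≠ k) :
    msgn {j} (insert k I) * msgn {k} (insert j I) = -(msgn I {j} * msgn I {k}) := by
  have hsq : ((-1 : ℂ) ^ #I) * (-1) ^ #I = 1 := by simp [← mul_pow]
  rw [msgn_singleton_left, msgn_singleton_left, msgn_singleton_right, msgn_singleton_right,
    filter_insert, filter_insert]
  rcases hjk.lt_or_gt with h | h
  · rw [if_neg h.asymm, if_pos h, card_insert_of_notMem fun hI => hj (mem_filter.1 hI).1,
      pow_succ, neg_one_pow_card_filter_lt hj, neg_one_pow_card_filter_lt hk]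
    linear_combination (-(-1 : ℂ) ^ #{i ∈ I | j < i} * (-1) ^ #{i ∈ I | k < i}) * hsq
  · rw [if_pos h, if_neg h.asymm, card_insert_of_notMem fun hI => hk (mem_filter.1 hI).1,
      pow_succ, neg_one_pow_card_filter_lt hj, neg_one_pow_card_filter_lt hk]
    linear_combination (-(-1 : ℂ) ^ #{i ∈ I | j < i} * (-1) ^ #{i ∈ I | k < i}) * hsq

theorem vee_of_isGrade_one {u : GF n} (hu : IsGrade 1 u) (w : GF n) (I : Finset (Fin n)) :
    vee u w I = ∑ j ∈ Iᶜ, msgn I {j} * u {j} * w (insert j I) := by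
  rw [vee, ← compl_eq_univ_sdiff, sum_powerset_eq_sum_singleton _ fun J hJ => by simp [hu J hJ]]
  simp only [union_singleton]

theorem wedge_of_isGrade_one {u : GF n} (hu : IsGrade 1 u) (w : GF n) (S : Finset (Fin n)) :
    wedge u w S = ∑ j ∈ S, msgn {j} (S.erase j) * u {j} * w (S.erase j) := by
  rw [wedge, sum_powerset_eq_sum_singleton _ fun J hJ => by simp [hu J hJ]]
  simp only [sdiff_singleton_eq_erase]

theorem ginner_of_isGrade_one {u : GF n} (hu : IsGrade 1 u) (v : GF n) :
    ginner u v = ∑ j, u {j} * v {j} := by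
  rw [ginner, ← powerset_univ, sum_powerset_eq_sum_singleton _ fun J hJ => by simp [hu J hJ]]

/-- The off-diagonal (`j ≠ k`) part of `⟨u¹ ∨ u^l, v¹ ∨ v^l⟩` for one-forms `u¹`, `v¹`. -/
def veeCrossTerm (u1 v1 ul vl : GF n) : ℂ :=
  ∑ I, ∑ p ∈ Iᶜ.offDiag,
    msgn I {p.1} * u1 {p.1} * ul (insert p.1 I) * (msgn I {p.2} * v1 {p.2} * vl (insert p.2 I))

theorem ginner_comm (u v : GF n) : ginner u v = ginner v u :=
  sum_congr rfl fun _ _ => mul_comm _ _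

theorem ginner_vee_vee_of_isGrade_one {u1 v1 : GF n} (hu1 : IsGrade 1 u1) (hv1 : IsGrade 1 v1)
    (ul vl : GF n) :
    ginner (vee u1 ul) (vee v1 vl) =
      ∑ T, (∑ j ∈ T, u1 {j} * v1 {j}) * (ul T * vl T) + veeCrossTerm u1 v1 ul vl := by
  simp only [ginner, vee_of_isGrade_one hu1, vee_of_isGrade_one hv1,
    sum_mul_sum_eq_sum_add_sum_offDiag, sum_add_distrib, veeCrossTerm]
  congr 1
  have hdiag : ∀ (I : Finset (Fin n)) (j : Fin n),
      msgn I {j} * u1 {j} * ul (insert j I) * (msgn I {j} * v1 {j} * vl (insert j I)) =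
        u1 {j} * v1 {j} * (ul (insert j I) * vl (insert j I)) := fun I j => by
    linear_combination (u1 {j} * v1 {j} * (ul (insert j I) * vl (insert j I))) *
      msgn_mul_self I {j}
  simp only [hdiag, sum_sum_compl_insert fun j T => u1 {j} * v1 {j} * (ul T * vl T), sum_mul]

theorem ginner_wedge_wedge_of_isGrade_one {u1 v1 : GF n} (hu1 : IsGrade 1 u1)
    (hv1 : IsGrade 1 v1) (ul vl : GF n) :
    ginner (wedge v1 ul) (wedge u1 vl) =
      ∑ T, (∑ j ∈ Tᶜ, u1 {j} * v1 {j}) * (ul T * vl T) - veeCrossTerm u1 v1 ul vl := by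
  rw [ginner_comm]
  simp only [ginner, wedge_of_isGrade_one hu1, wedge_of_isGrade_one hv1,
    sum_mul_sum_eq_sum_add_sum_offDiag, sum_add_distrib, sub_eq_add_neg, veeCrossTerm,
    ← sum_neg_distrib]
  congr 1
  · have hdiag : ∀ (S : Finset (Fin n)) (j : Fin n),
        msgn {j} (S.erase j) * u1 {j} * vl (S.erase j) *
            (msgn {j} (S.erase j) * v1 {j} * ul (S.erase j)) =
          u1 {j} * v1 {j} * (ul (S.erase j) * vl (S.erase j)) := fun S j => by
      linear_combination (u1 {j} * v1 {j} * (ul (S.erase j) * vl (S.erase j))) *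
        msgn_mul_self {j} (S.erase j)
    simp only [hdiag, ← sum_sum_compl_insert fun j T => u1 {j} * v1 {j} *
      (ul (T.erase j) * vl (T.erase j)), sum_mul]
    refine sum_congr rfl fun I _ => sum_congr rfl fun j hj => ?_
    rw [erase_insert (mem_compl.1 hj)]
  · rw [← sum_offDiag_compl_insert_insert fun j k S =>
      msgn {j} (S.erase j) * u1 {j} * vl (S.erase j) *
        (msgn {k} (S.erase k) * v1 {k} * ul (S.erase k))]
    refine sum_congr rfl fun I _ => sum_congr rfl fun p hp => ?_
    obtain ⟨hj, hk, hjk⟩ := mem_offDiag.1 hp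
    rw [mem_compl] at hj hk
    have hk' : p.2 ∉ insert p.1 I := by simp [Ne.symm hjk, hk]
    rw [erase_insert (by simp [hjk, hj]), insert_comm, erase_insert hk']
    linear_combination (u1 {p.1} * v1 {p.2} * ul (insert p.1 I) * vl (insert p.2 I)) *
      msgn_singleton_insert_mul_msgn_singleton_insert hj hk hjk

theorem statement10_general (u1 v1 ul vl : GF n)
    (hu1 : IsGrade 1 u1) (hv1 : IsGrade 1 v1) :
    ginner (vee u1 ul) (vee v1 vl) + ginner (wedge v1 ul) (wedge u1 vl)
      = ginner u1 v1 * ginner ul vl := by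
  rw [ginner_vee_vee_of_isGrade_one hu1 hv1, ginner_wedge_wedge_of_isGrade_one hu1 hv1,
    add_add_sub_cancel, ← sum_add_distrib, ginner_of_isGrade_one hu1, ginner, mul_sum]
  refine sum_congr rfl fun T _ => ?_
  rw [← add_mul, sum_add_sum_compl]

/-- Corollary A.2.  For `u¹, v¹ ∈ Λ¹` and `u^l, v^l ∈ Λ^l`:
`⟨u¹∨u^l, v¹∨v^l⟩ + ⟨v¹∧u^l, u¹∧v^l⟩ = ⟨u¹,v¹⟩⟨u^l,v^l⟩`. -/
theorem statement10 (hn : 2 ≤ n) (l : ℕ) (hl : l ≤ n) (u1 v1 ul vl : GF n)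
    (hu1 : IsGrade 1 u1) (hv1 : IsGrade 1 v1) (hul : IsGrade l ul) (hvl : IsGrade l vl) :
    ginner (vee u1 ul) (vee v1 vl) + ginner (wedge v1 ul) (wedge u1 vl)
      = ginner u1 v1 * ginner ul vl :=
  statement10_general u1 v1 ul vl hu1 hv1

end EMPaper
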